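/- Let λ₁,…,λ_m be real numbers with H_p > 0 and such that all the Newton transformations T_0,…,T_{p-1} are positive definite; equivalently, assume H_{k;l} > 0 for all k ∈ {1,…,p−1} and all l, and H_k > 0 for k ≤ p. Then for all 1 ≤ i < j ≤ p and every l ∈ {1,…,m}, the strict inequality j·H_i·H_{j-1;l} > i·H_j·H_{i-1;l} holds. -/

import Mathlib

open Finset

/-- The `k`-th elementary symmetric polynomial of `λ₁,…,λ_m`. -/
noncomputable def esymm (m k : ℕ) (lam : Fin m → ℝ) : ℝ :=
  ∑ s ∈ (Finset.univ : Finset (Fin m)).powersetCard k, ∏ i ∈ s, lam i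

/-- The `k`-th elementary symmetric polynomial of the `m−1` variables with `λ_l` omitted. -/
noncomputable def esymmOmit (m k : ℕ) (lam : Fin m → ℝ) (l : Fin m) : ℝ :=
  ∑ s ∈ ((Finset.univ : Finset (Fin m)).erase l).powersetCard k, ∏ i ∈ s, lam i

/-- Normalized `k`-th elementary symmetric function `H_k = σ_k / C(m,k)`. -/
noncomputable def Hk (m k : ℕ) (lam : Fin m → ℝ) : ℝ := esymm m k lam / (m.choose k)

/-- Normalized `k`-th elementary symmetric function of the tuple with `λ_l` omitted. -/
noncomputable def HkOmit (m k : ℕ) (lam : Fin m → ℝ) (l : Fin m) : ℝ :=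
  esymmOmit m k lam l / ((m - 1).choose k)

/-!
Write `H_k` for the normalized elementary symmetric functions of all `m` numbers and `A_k` for
those of the `m - 1` numbers left after omitting `λ_l`. Adjoining `λ_l` gives
`m H_k = (m - k) A_k + k λ_l A_{k-1}`, so in `m (j H_i A_{j-1} - i H_j A_{i-1})` the terms in `λ_l`
cancel and `j (m - i) A_i A_{j-1} - i (m - j) A_j A_{i-1}` is left. Newton's inequalities
`A_{k-1} A_{k+1} ≤ A_k²` together with positivity of `A_{i-1}, …, A_{j-1}` give
`A_j A_{i-1} ≤ A_i A_{j-1}`, so this is at least `m (j - i) A_i A_{j-1} > 0`.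

Newton's inequalities hold for every finite multiset of reals, by induction on its size: the roots
of the derivative of `∏ (X - a)` are real by Rolle and have the same normalized elementary symmetric
functions up to degree `n - 1`; at the top degree one passes to reciprocals, and for two numbers
the inequality is AM-GM.
-/

section ChooseRatio

variable {K : Type*} [Field K] [CharZero K]

lemma add_one_div_choose_add_one {n k : ℕ} (h : k ≤ n) :
    ((n : K) + 1) / (n + 1).choose (k + 1) = (k + 1) / n.choose k := by
  rw [div_eq_div_iff (by exact_mod_cast Nat.choose_ne_zero (by omega))
    (by exact_mod_cast Nat.choose_ne_zero h)]
  exact_mod_cast (Nat.add_one_mul_choose_eq n k).trans (mul_comm _ _)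

lemma add_one_div_choose_add_one_of_lt {n k : ℕ} (h : k < n) :
    ((n : K) + 1) / (n + 1).choose (k + 1) = (n - k) / n.choose (k + 1) := by
  rw [div_eq_div_iff (by exact_mod_cast Nat.choose_ne_zero (by omega))
    (by exact_mod_cast Nat.choose_ne_zero h)]
  have := Nat.choose_mul_succ_eq n (k + 1)
  rw [Nat.add_sub_add_right] at this
  rw [← Nat.cast_sub h.le]
  exact_mod_cast (mul_comm _ _).trans (this.trans (mul_comm _ _))

end ChooseRatio

lemma mul_le_mul_of_forall_mul_le_sq {f : ℕ → ℝ} (hf : ∀ k, f k * f (k + 2) ≤ f (k + 1) ^ 2)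
    {i j : ℕ} (hij : i ≤ j) (hpos : ∀ k, i ≤ k → k ≤ j → 0 < f k) :
    f (j + 1) * f i ≤ f (i + 1) * f j := by
  induction j, hij using Nat.le_induction with
  | base => rw [mul_comm]
  | succ j hij ih =>
    have ih := ih fun k hik hkj => hpos k hik (by omega)
    have hi := hpos i le_rfl (by omega)
    have hj := hpos j hij (by omega)
    have hj' := hpos (j + 1) (by omega) le_rfl
    refine le_of_mul_le_mul_left ?_ hj
    nlinarith [mul_le_mul_of_nonneg_right (hf j) hi.le, mul_le_mul_of_nonneg_left ih hj'.le]

namespace Multiset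

section CommSemiring

variable {R : Type*} [CommSemiring R]

@[simp]
lemma esymm_zero (s : Multiset R) : s.esymm 0 = 1 := by
  simp [esymm]

lemma esymm_cons_succ (a : R) (s : Multiset R) (k : ℕ) :
    (a ::ₘ s).esymm (k + 1) = s.esymm (k + 1) + a * s.esymm k := by
  simp only [esymm, powersetCard_cons, map_add, sum_add, map_map, Function.comp_def, prod_cons,
    sum_map_mul_left]

lemma esymm_eq_zero_of_card_lt {s : Multiset R} {k : ℕ} (h : card s < k) : s.esymm k = 0 := by
  simp [esymm, powersetCard_eq_empty _ h]

lemma esymm_card (s : Multiset R) : s.esymm (card s) = s.prod := by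
  induction s using Multiset.induction_on with
  | empty => simp
  | cons a s ih =>
    rw [card_cons, esymm_cons_succ, esymm_eq_zero_of_card_lt (Nat.lt_succ_self _), ih, prod_cons,
      zero_add]

end CommSemiring

lemma esymm_map_inv_mul_prod {K : Type*} [Field K] {s : Multiset K} (hs : (0 : K) ∉ s)
    {j k : ℕ} (h : j + k = card s) : (s.map (·⁻¹)).esymm j * s.prod = s.esymm k := by
  induction s using Multiset.induction_on generalizing j k with
  | empty =>
    obtain ⟨rfl, rfl⟩ : j = 0 ∧ k = 0 := by simpa using h
    simp
  | cons a s ih =>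
    have ha : a ≠ 0 := fun h => hs (h ▸ mem_cons_self a s)
    have hs' : (0 : K) ∉ s := fun h => hs (mem_cons_of_mem h)
    rw [card_cons] at h
    rcases j with _ | j
    · rw [zero_add] at h
      rw [esymm_zero, one_mul, h, ← card_cons a s, esymm_card]
    rw [map_cons, esymm_cons_succ, prod_cons]
    rcases k with _ | k
    · have hprod := ih hs' (show j + 0 = card s by omega)
      rw [esymm_zero] at hprod
      rw [esymm_eq_zero_of_card_lt (by rw [card_map]; omega), esymm_zero, ← hprod, zero_add,
        mul_mul_mul_comm, inv_mul_cancel₀ ha, one_mul]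
    · rw [esymm_cons_succ, ← ih hs' (show j + 1 + k = card s by omega),
        ← ih hs' (show j + (k + 1) = card s by omega)]
      field_simp
      ring

section Normalized

variable {K : Type*} [Field K]

noncomputable def normalizedEsymm (s : Multiset K) (k : ℕ) : K :=
  s.esymm k / (card s).choose k

@[simp]
lemma normalizedEsymm_zero (s : Multiset K) : s.normalizedEsymm 0 = 1 := by
  simp [normalizedEsymm]

lemma normalizedEsymm_eq_zero_of_card_lt {s : Multiset K} {k : ℕ} (h : card s < k) :
    s.normalizedEsymm k = 0 := by
  simp [normalizedEsymm, esymm_eq_zero_of_card_lt h]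

lemma normalizedEsymm_card (s : Multiset K) : s.normalizedEsymm (card s) = s.prod := by
  simp [normalizedEsymm, esymm_card]

lemma normalizedEsymm_eq_prod_mul_normalizedEsymm_map_inv {s : Multiset K} (hs : (0 : K) ∉ s)
    {j k : ℕ} (h : j + k = card s) :
    s.normalizedEsymm k = s.prod * (s.map (·⁻¹)).normalizedEsymm j := by
  rw [normalizedEsymm, normalizedEsymm, card_map, ← esymm_map_inv_mul_prod hs h,
    ← h, Nat.choose_symm_add]
  ring

variable [CharZero K]

lemma card_add_one_mul_normalizedEsymm_cons (a : K) (s : Multiset K) (k : ℕ) :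
    ((card s : K) + 1) * (a ::ₘ s).normalizedEsymm (k + 1) =
      ((card s : K) - k) * s.normalizedEsymm (k + 1) + (k + 1) * a * s.normalizedEsymm k := by
  have hfirst : ((card s : K) + 1) * (s.esymm (k + 1) / (card s + 1).choose (k + 1)) =
      ((card s : K) - k) * s.normalizedEsymm (k + 1) := by
    rcases lt_or_ge k (card s) with hk | hk
    · rw [normalizedEsymm, mul_div_assoc', mul_comm, mul_div_assoc,
        add_one_div_choose_add_one_of_lt hk]
      ring
    · simp [normalizedEsymm, esymm_eq_zero_of_card_lt (Nat.lt_succ_of_le hk)]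
  have hsecond : ((card s : K) + 1) * (a * s.esymm k / (card s + 1).choose (k + 1)) =
      (k + 1) * a * s.normalizedEsymm k := by
    rcases le_or_gt k (card s) with hk | hk
    · rw [normalizedEsymm, mul_div_assoc', mul_comm, mul_div_assoc, add_one_div_choose_add_one hk]
      ring
    · simp [normalizedEsymm, esymm_eq_zero_of_card_lt hk]
  rw [normalizedEsymm, card_cons, esymm_cons_succ, add_div, mul_add, hfirst, hsecond]

end Normalized

section Real

open Polynomial

lemma card_roots_derivative_prod_X_sub_C (s : Multiset ℝ) :
    card (derivative (s.map fun a => X - C a).prod).roots = card s - 1 := by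
  set q := (s.map fun a => X - C a).prod
  have hdeg : q.natDegree = card s := natDegree_multiset_prod_X_sub_C_eq_card s
  refine le_antisymm ?_ ?_
  · exact (card_roots' _).trans (by rw [natDegree_derivative, hdeg])
  · have := card_roots_le_derivative q
    rw [roots_multiset_prod_X_sub_C] at this
    omega

lemma add_one_mul_esymm_roots_derivative_prod_X_sub_C {s : Multiset ℝ} {n : ℕ}
    (hs : card s = n + 1) {i : ℕ} (hi : i ≤ n) :
    ((n : ℝ) + 1) * (derivative (s.map fun a => X - C a).prod).roots.esymm i =
      ((n : ℝ) - i + 1) * s.esymm i := by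
  set q := (s.map fun a => X - C a).prod
  have hdeg : q.natDegree = n + 1 := by rw [natDegree_multiset_prod_X_sub_C_eq_card, hs]
  have hmonic : q.Monic := monic_multiset_prod_of_monic _ _ fun a _ => monic_X_sub_C a
  have hdeg' : (derivative q).natDegree = n := by simp [hdeg]
  have hroots : card (derivative q).roots = (derivative q).natDegree := by
    rw [card_roots_derivative_prod_X_sub_C, hs, hdeg']; rfl
  have h1 := coeff_eq_esymm_roots_of_card hroots (k := n - i) (by omega)
  rw [coeff_derivative, prod_X_sub_C_coeff s (by omega), leadingCoeff_derivative,
    hmonic.leadingCoeff, hdeg', hdeg, hs, show n + 1 - (n - i + 1) = i by omega,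
    show n - (n - i) = i by omega, Nat.cast_sub hi] at h1
  push_cast at h1
  have hsign : ((-1 : ℝ) ^ i) ^ 2 = 1 := by rw [← pow_mul, mul_comm, pow_mul, neg_one_sq, one_pow]
  linear_combination (-(-1 : ℝ) ^ i) * h1 +
    (((n : ℝ) - i + 1) * s.esymm i - ((n : ℝ) + 1) * (derivative q).roots.esymm i) * hsign

lemma exists_card_eq_normalizedEsymm_eq {s : Multiset ℝ} {n : ℕ} (hs : card s = n + 1) :
    ∃ t : Multiset ℝ, card t = n ∧ ∀ i ≤ n, t.normalizedEsymm i = s.normalizedEsymm i := by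
  refine ⟨_, by rw [card_roots_derivative_prod_X_sub_C, hs, Nat.add_sub_cancel], fun i hi => ?_⟩
  have hesymm := add_one_mul_esymm_roots_derivative_prod_X_sub_C hs hi
  have hchoose : (n.choose i : ℝ) * (n + 1) = (n + 1).choose i * ((n : ℝ) - i + 1) := by
    have := Nat.choose_mul_succ_eq n i
    rw [Nat.sub_add_comm hi] at this
    exact_mod_cast this
  rw [normalizedEsymm, normalizedEsymm, card_roots_derivative_prod_X_sub_C, hs,
    Nat.add_sub_cancel, div_eq_div_iff (by exact_mod_cast Nat.choose_ne_zero hi)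
      (by exact_mod_cast Nat.choose_ne_zero (by omega))]
  refine mul_left_cancel₀ (Nat.cast_add_one_ne_zero n) ?_
  linear_combination ((n + 1).choose i : ℝ) * hesymm - s.esymm i * hchoose

lemma normalizedEsymm_two_le_sq_of_card_eq_two {s : Multiset ℝ} (hs : card s = 2) :
    s.normalizedEsymm 2 ≤ s.normalizedEsymm 1 ^ 2 := by
  obtain ⟨x, y, rfl⟩ := card_eq_two.1 hs
  rw [normalizedEsymm, normalizedEsymm, hs, insert_eq_cons, esymm_pair_one, esymm_pair_two,
    Nat.choose_self, Nat.choose_one_right, Nat.cast_one, div_one]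
  nlinarith [sq_nonneg (x - y)]

theorem normalizedEsymm_mul_le_sq (s : Multiset ℝ) (k : ℕ) :
    s.normalizedEsymm k * s.normalizedEsymm (k + 2) ≤ s.normalizedEsymm (k + 1) ^ 2 := by
  obtain ⟨n, hn⟩ : ∃ n, card s = n := ⟨_, rfl⟩
  induction n using Nat.strong_induction_on generalizing s k with
  | _ n ih =>
  have of_lt_card : ∀ s' : Multiset ℝ, card s' = n → ∀ k', k' + 2 < n →
      s'.normalizedEsymm k' * s'.normalizedEsymm (k' + 2) ≤ s'.normalizedEsymm (k' + 1) ^ 2 := by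
    intro s' hs' k' hk'
    obtain ⟨t, ht, hN⟩ := exists_card_eq_normalizedEsymm_eq (s := s') (n := n - 1) (by omega)
    rw [← hN k' (by omega), ← hN (k' + 1) (by omega), ← hN (k' + 2) (by omega)]
    exact ih (n - 1) (by omega) t k' ht
  rcases lt_trichotomy n (k + 2) with hlt | rfl | hgt
  · rw [normalizedEsymm_eq_zero_of_card_lt (k := k + 2) (by omega), mul_zero]
    positivity
  · rcases k with _ | k
    · simpa using normalizedEsymm_two_le_sq_of_card_eq_two hn
    by_cases h0 : (0 : ℝ) ∈ s
    · rw [← hn, normalizedEsymm_card, prod_eq_zero h0, mul_zero]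
      positivity
    -- Reciprocals send `(H_{k+1}, H_{k+2}, H_{k+3})` to multiples of `(H_2, H_1, H_0)`.
    set t := s.map (·⁻¹)
    have hN (i j : ℕ) (h : j + i = k + 3) :
        s.normalizedEsymm i = s.prod * t.normalizedEsymm j :=
      normalizedEsymm_eq_prod_mul_normalizedEsymm_map_inv h0 (by omega)
    have ht := of_lt_card t (by rw [card_map, hn]) 0 (by omega)
    rw [hN (k + 1) 2 (by omega), hN (k + 1 + 2) 0 (by omega), hN (k + 1 + 1) 1 (by omega)]
    calc s.prod * t.normalizedEsymm 2 * (s.prod * t.normalizedEsymm 0)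
        = s.prod ^ 2 * (t.normalizedEsymm 0 * t.normalizedEsymm 2) := by ring
      _ ≤ s.prod ^ 2 * t.normalizedEsymm 1 ^ 2 := mul_le_mul_of_nonneg_left ht (sq_nonneg _)
      _ = (s.prod * t.normalizedEsymm 1) ^ 2 := by ring
  · exact of_lt_card s hn k hgt

lemma normalizedEsymm_cons_cross_lt (s : Multiset ℝ) (a : ℝ) {i j : ℕ} (hij : i < j)
    (hpos : ∀ k, i ≤ k → k ≤ j → 0 < s.normalizedEsymm k) :
    (i + 1) * (a ::ₘ s).normalizedEsymm (j + 1) * s.normalizedEsymm i <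
      (j + 1) * (a ::ₘ s).normalizedEsymm (i + 1) * s.normalizedEsymm j := by
  have hj : j ≤ card s := by
    by_contra! h
    exact (hpos j hij.le le_rfl).ne' (normalizedEsymm_eq_zero_of_card_lt h)
  have hrec_i := card_add_one_mul_normalizedEsymm_cons a s i
  have hrec_j := card_add_one_mul_normalizedEsymm_cons a s j
  have hchain := mul_le_mul_of_forall_mul_le_sq (normalizedEsymm_mul_le_sq s) hij.le hpos
  have hA_i := hpos i le_rfl hij.le
  have hA_i1 := hpos (i + 1) (by omega) hij
  have hA_j := hpos j hij.le le_rfl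
  have hji : (0 : ℝ) < j - i := sub_pos.2 (by exact_mod_cast hij)
  have hsj : (0 : ℝ) ≤ card s - j := sub_nonneg.2 (by exact_mod_cast hj)
  set n : ℝ := (card s : ℝ)
  set X := s.normalizedEsymm (i + 1) * s.normalizedEsymm j
  set Y := s.normalizedEsymm (j + 1) * s.normalizedEsymm i
  have key : (n + 1) * ((j + 1) * (a ::ₘ s).normalizedEsymm (i + 1) * s.normalizedEsymm j) -
      (n + 1) * ((i + 1) * (a ::ₘ s).normalizedEsymm (j + 1) * s.normalizedEsymm i) =
      (n + 1) * (j - i) * X + (i + 1) * (n - j) * (X - Y) := by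
    linear_combination ((j : ℝ) + 1) * s.normalizedEsymm j * hrec_i -
      ((i : ℝ) + 1) * s.normalizedEsymm i * hrec_j
  have hX : 0 < (n + 1) * (j - i) * X := by positivity
  have hXY : 0 ≤ (i + 1) * (n - j) * (X - Y) := by
    have := sub_nonneg.2 hchain
    positivity
  refine lt_of_mul_lt_mul_left ?_ (by positivity : 0 ≤ n + 1)
  linarith

end Real

end Multiset

section

variable {m : ℕ} (lam : Fin m → ℝ)

lemma Hk_eq_normalizedEsymm (k : ℕ) :
    Hk m k lam = (univ.val.map lam).normalizedEsymm k := by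
  rw [Hk, Multiset.normalizedEsymm, esymm, Finset.esymm_map_val, Multiset.card_map, card_val,
    card_univ, Fintype.card_fin]

lemma HkOmit_eq_normalizedEsymm (k : ℕ) (l : Fin m) :
    HkOmit m k lam l = ((univ.erase l).val.map lam).normalizedEsymm k := by
  rw [HkOmit, Multiset.normalizedEsymm, esymmOmit, Finset.esymm_map_val, Multiset.card_map,
    card_val, card_erase_of_mem (mem_univ l), card_univ, Fintype.card_fin]

lemma map_univ_val_eq_cons (l : Fin m) :
    univ.val.map lam = lam l ::ₘ (univ.erase l).val.map lam := by
  rw [← Multiset.map_cons, erase_val, Multiset.cons_erase (mem_univ_val l)]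

end

theorem strict_cross_inequality_general (m p : ℕ) (lam : Fin m → ℝ)
    (hposOmit : ∀ k, 1 ≤ k → k ≤ p - 1 → ∀ l : Fin m, 0 < HkOmit m k lam l)
    (i j : ℕ) (hi : 1 ≤ i) (hij : i < j) (hjp : j ≤ p) (l : Fin m) :
    (i : ℝ) * Hk m j lam * HkOmit m (i - 1) lam l <
      (j : ℝ) * Hk m i lam * HkOmit m (j - 1) lam l := by
  set s := (univ.erase l).val.map lam
  have hpos : ∀ k ≤ p - 1, 0 < s.normalizedEsymm k := by
    rintro (_ | k) hk
    · simp
    · exact HkOmit_eq_normalizedEsymm lam _ l ▸ hposOmit _ (by omega) hk l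
  obtain ⟨i, rfl⟩ : ∃ i', i = i' + 1 := ⟨i - 1, by omega⟩
  obtain ⟨j, rfl⟩ : ∃ j', j = j' + 1 := ⟨j - 1, by omega⟩
  rw [Hk_eq_normalizedEsymm, Hk_eq_normalizedEsymm, HkOmit_eq_normalizedEsymm,
    HkOmit_eq_normalizedEsymm, map_univ_val_eq_cons lam l, Nat.add_sub_cancel, Nat.add_sub_cancel]
  push_cast
  exact Multiset.normalizedEsymm_cons_cross_lt s (lam l) (by omega)
    fun k _ hk => hpos k (by omega)

/-- j·H_i·H_{j-1;l} > i·H_j·H_{i-1;l} under the positivity assumptions. -/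
theorem strict_cross_inequality (m p : ℕ) (hm : 2 ≤ m) (lam : Fin m → ℝ)
    (hposOmit : ∀ k, 1 ≤ k → k ≤ p - 1 → ∀ l : Fin m, 0 < HkOmit m k lam l)
    (hpos : ∀ k, 1 ≤ k → k ≤ p → 0 < Hk m k lam)
    (i j : ℕ) (hi : 1 ≤ i) (hij : i < j) (hjp : j ≤ p) (l : Fin m) :
    (i : ℝ) * Hk m j lam * HkOmit m (i - 1) lam l <
      (j : ℝ) * Hk m i lam * HkOmit m (j - 1) lam l :=
  strict_cross_inequality_general m p lam hposOmit i j hi hij hjp l
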